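/- For each of the three bimodule maps v ∈ Hom_{A^e}(P_2, A) given (in the notation v = (v(1⊗r_x⊗1), v(1⊗r_y⊗1))) by v₁ = (y, x), v₂ = (x, 0), v₂' = (0, y), the 1-cochain Δ(v) ∈ Hom_{A^e}(P_1, A) defined by Δ(v)(1⊗x⊗1) = Σ_{b∈B∖{1}} ⟨v(t₁(b⊗x⊗1 + x·C(b))), 1⟩·b* and Δ(v)(1⊗y⊗1) = Σ_{b∈B∖{1}} ⟨v(t₁(b⊗y⊗1 + y·C(b))), 1⟩·b* is a Hochschild coboundary, i.e. it lies in the image of the map Hom_{A^e}(P_0, A) → Hom_{A^e}(P_1, A) given by precomposition with d_1. Hence Δ(v₁) = Δ(v₂) = Δ(v₂') = 0 in HH¹(A). -/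

import Mathlib

open scoped TensorProduct
open MulOpposite

noncomputable section

namespace QP

variable (k : Type*) [Field k]

/-- The generator `x` of the free algebra `k⟨x,y⟩`. -/
def Xg : FreeAlgebra k (Fin 2) := FreeAlgebra.ι k 0
/-- The generator `y` of the free algebra `k⟨x,y⟩`. -/
def Yg : FreeAlgebra k (Fin 2) := FreeAlgebra.ι k 1

/-- The relations `x²+yxy, y²+xyx, x⁴, y⁴` defining `kQ₈` in characteristic 2. -/
inductive QRel : FreeAlgebra k (Fin 2) → FreeAlgebra k (Fin 2) → Prop
  | rx : QRel (Xg k * Xg k + Yg k * Xg k * Yg k) 0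
  | ry : QRel (Yg k * Yg k + Xg k * Yg k * Xg k) 0
  | x4 : QRel (Xg k ^ 4) 0
  | y4 : QRel (Yg k ^ 4) 0

/-- `A = k⟨x,y⟩/(x²+yxy, y²+xyx, x⁴, y⁴)`. -/
abbrev A := RingQuot (QRel k)

/-- The image of `x` in `A`. -/
def x : A k := RingQuot.mkAlgHom k (QRel k) (Xg k)
/-- The image of `y` in `A`. -/
def y : A k := RingQuot.mkAlgHom k (QRel k) (Yg k)

/-- The monomial basis `1, x, y, xy, yx, xyx, yxy, xyxy` of `A`. -/
def mon : Fin 8 → A k :=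
  ![1, x k, y k, x k * y k, y k * x k, x k * y k * x k, y k * x k * y k,
    x k * y k * x k * y k]

/-- The dual family `1* = xyxy, x* = yxy, y* = xyx, (xy)* = xy, (yx)* = yx,
`(xyx)* = y, (yxy)* = x, (xyxy)* = 1`. -/
def dm : Fin 8 → A k :=
  ![mon k 7, mon k 6, mon k 5, mon k 3, mon k 4, mon k 2, mon k 1, mon k 0]

/-- `P₀ = P₃ = P₄ = A ⊗ A`. -/
abbrev AA := A k ⊗[k] A k
/-- `P₁ ≅ (A⊗A)² ≅ A ⊗ kQ₁ ⊗ A` (components: `x`-slot, `y`-slot); likewise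
`P₂ ≅ (A⊗A)² ≅ A ⊗ kQ₁* ⊗ A` (components: `r_x`-slot, `r_y`-slot). -/
abbrev PP := AA k × AA k

/-- Multiplication `A ⊗ A → A`. -/
def mulm : AA k →ₗ[k] A k := LinearMap.mul' k (A k)

/-- `two p q : a⊗b ↦ (a*p)⊗(q*b)`: the bimodule map `A⊗A → A⊗A` determined by
`1⊗1 ↦ p⊗q`. -/
def two (p q : A k) : AA k →ₗ[k] AA k :=
  TensorProduct.map (LinearMap.mulRight k p) (LinearMap.mulLeft k q)

/-- `el p q : a ↦ p⊗(q*a)`: the right `A`-module map `A → A⊗A` determined by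
`1 ↦ p⊗q`. -/
def el (p q : A k) : A k →ₗ[k] AA k :=
  (TensorProduct.mk k (A k) (A k) p).comp (LinearMap.mulLeft k q)

/-- Left multiplication by `a` on `A⊗A`. -/
def lm (a : A k) : AA k →ₗ[k] AA k := LinearMap.rTensor (A k) (LinearMap.mulLeft k a)
/-- Right multiplication by `a` on `A⊗A`. -/
def rm (a : A k) : AA k →ₗ[k] AA k := LinearMap.lTensor (A k) (LinearMap.mulRight k a)
/-- Left multiplication by `a` on `P₁` (or `P₂`). -/
def lmp (a : A k) : PP k →ₗ[k] PP k := (lm k a).prodMap (lm k a)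

/-- The bimodule map `A⊗A → A` determined by `1⊗1 ↦ c`, i.e. `a⊗b ↦ a*c*b`. -/
def bimap (c : A k) : AA k →ₗ[k] A k := (mulm k).comp (two k c 1)

/-- The bimodule map `P₁ → A` (or `P₂ → A`) with values `(c₁, c₂)` on the two
free generators. -/
def pairc (c1 c2 : A k) : PP k →ₗ[k] A k := (bimap k c1).coprod (bimap k c2)

/-- `d₀ : A⊗A → A` is the multiplication. -/
def d0 : AA k →ₗ[k] A k := mulm k

/-- `d₁ : P₁ → P₀`, `1⊗x⊗1 ↦ x⊗1+1⊗x`, `1⊗y⊗1 ↦ y⊗1+1⊗y`. -/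
def d1 : PP k →ₗ[k] AA k :=
  (two k (x k) 1 + two k 1 (x k)).coprod (two k (y k) 1 + two k 1 (y k))

/-- `d₂ : P₂ → P₁`, `1⊗r_x⊗1 ↦ 1⊗x⊗x + x⊗x⊗1 + 1⊗y⊗xy + y⊗x⊗y + yx⊗y⊗1` and
`1⊗r_y⊗1 ↦ 1⊗y⊗y + y⊗y⊗1 + 1⊗x⊗yx + x⊗y⊗x + xy⊗x⊗1`. -/
def d2 : PP k →ₗ[k] PP k :=
  ((two k 1 (x k) + two k (x k) 1 + two k (y k) (y k)).prod
      (two k 1 (x k * y k) + two k (y k * x k) 1)).coprod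
    ((two k 1 (y k * x k) + two k (x k * y k) 1).prod
      (two k 1 (y k) + two k (y k) 1 + two k (x k) (x k)))

/-- `d₃ : P₃ → P₂`, `1⊗1 ↦ x⊗r_x⊗1 + 1⊗r_x⊗x + y⊗r_y⊗1 + 1⊗r_y⊗y`. -/
def d3 : AA k →ₗ[k] PP k :=
  (two k (x k) 1 + two k 1 (x k)).prod (two k (y k) 1 + two k 1 (y k))

/-- `ρ : A → A⊗A`, `1 ↦ Σ_{b∈B} b*⊗b`. -/
def rho : A k →ₗ[k] AA k :=
  ∑ i : Fin 8,
    (((TensorProduct.mk k (A k) (A k)).flip (mon k i)).comp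
      (LinearMap.mulRight k (dm k i)))

/-- `d₄ = ρ ∘ d₀ : P₄ → P₃`. -/
def d4 : AA k →ₗ[k] AA k := (rho k).comp (d0 k)

variable {k}

/-- The right `A`-module map `A⊗A → V` sending `b⊗a ↦ g_b(a)` for `b` running
through the monomial basis `bb`. -/
def rext {V : Type*} [AddCommGroup V] [Module k V] (bb : Module.Basis (Fin 8) k (A k))
    (g : Fin 8 → (A k →ₗ[k] V)) : AA k →ₗ[k] V :=
  TensorProduct.lift (bb.constr k g)

variable (k)

/-- `t₋₁ : A → A⊗A`, `a ↦ 1⊗a`. -/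
def tneg : A k →ₗ[k] AA k := TensorProduct.mk k (A k) (A k) 1

/-- `C(b) ∈ P₁` for `b` in the monomial basis: the bimodule derivation applied
to the basis monomials. -/
def Cm : Fin 8 → PP k :=
  ![0,
    (1 ⊗ₜ 1, 0),
    (0, 1 ⊗ₜ 1),
    (1 ⊗ₜ y k, x k ⊗ₜ 1),
    (y k ⊗ₜ 1, 1 ⊗ₜ x k),
    (1 ⊗ₜ (y k * x k) + (x k * y k) ⊗ₜ 1, x k ⊗ₜ x k),
    (y k ⊗ₜ y k, 1 ⊗ₜ (x k * y k) + (y k * x k) ⊗ₜ 1),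
    (1 ⊗ₜ (y k * x k * y k) + (x k * y k) ⊗ₜ y k,
      x k ⊗ₜ (x k * y k) + (x k * y k * x k) ⊗ₜ 1)]

variable {k}

/-- `t₀ : P₀ → P₁`, `b⊗1 ↦ C(b)`, a right `A`-module map. -/
def t0 (bb : Module.Basis (Fin 8) k (A k)) : AA k →ₗ[k] PP k :=
  rext (V := PP k) bb
    ![0,
      (el k 1 1).prod 0,
      LinearMap.prod 0 (el k 1 1),
      (el k 1 (y k)).prod (el k (x k) 1),
      (el k (y k) 1).prod (el k 1 (x k)),
      (el k 1 (y k * x k) + el k (x k * y k) 1).prod (el k (x k) (x k)),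
      (el k (y k) (y k)).prod (el k 1 (x k * y k) + el k (y k * x k) 1),
      (el k 1 (y k * x k * y k) + el k (x k * y k) (y k)).prod
        (el k (x k) (x k * y k) + el k (x k * y k * x k) 1)]

/-- `t₁ : P₁ → P₂`, the right `A`-module map from the table in the paper. -/
def t1 (bb : Module.Basis (Fin 8) k (A k)) : PP k →ₗ[k] PP k :=
  (rext (V := PP k) bb
    ![0,
      (el k 1 1).prod 0,
      0,
      0,
      (el k (y k) 1 + el k (x k * y k) (y k)).prod (el k 1 (x k * y k)),
      (el k (x k * y k) 1).prod (el k (x k) (x k * y k)),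
      LinearMap.prod 0 (el k 1 (y k) + el k (y k) 1),
      (el k 1 (y k * x k * y k) + el k (x k) (x k) + el k (y k * x k * y k) 1).prod
        (el k (y k * x k) (x k * y k))]).coprod
  (rext (V := PP k) bb
    ![0,
      0,
      LinearMap.prod 0 (el k 1 1),
      (el k 1 (y k * x k)).prod (el k (x k) 1 + el k (y k * x k) (x k)),
      0,
      0,
      (el k (y k) (y k * x k)).prod (el k (y k * x k) 1),
      (el k (x k * y k) (y k * x k)).prod (el k (x k * y k * x k) 1)])

/-- `t₂ : P₂ → P₃`, the right `A`-module map from the table in the paper. -/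
def t2 (bb : Module.Basis (Fin 8) k (A k)) : PP k →ₗ[k] AA k :=
  (rext (V := AA k) bb
    ![0,
      el k 1 1,
      0,
      0,
      el k (y k) 1,
      el k (x k * y k) 1 + el k (x k) (y k),
      el k 1 (x k),
      el k 1 (y k * x k * y k) + el k (y k * x k * y k) 1 + el k (y k) (x k * y k)
        + el k (y k * x k) (y k)]).coprod
  (rext (V := AA k) bb
    ![0,
      0,
      0,
      el k (x k) 1,
      0,
      0,
      el k (y k) (x k) + el k (y k * x k) 1,
      el k (x k) (y k * x k) + el k (x k * y k) (x k) + el k (x k * y k * x k) 1])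

/-- `τ : P₃ → A`, `xyxy⊗1 ↦ 1`, `b⊗1 ↦ 0` for the other basis monomials. -/
def tau (bb : Module.Basis (Fin 8) k (A k)) : AA k →ₗ[k] A k :=
  rext bb ![0, 0, 0, 0, 0, 0, 0, LinearMap.id]

/-- `t₃ = t₋₁ ∘ τ : P₃ → P₄`. -/
def t3 (bb : Module.Basis (Fin 8) k (A k)) : AA k →ₗ[k] AA k := (tneg k).comp (tau bb)

/-- `Ψ₁(1⊗c⊗1) = t₀(c⊗1)`. -/
def psi1 (bb : Module.Basis (Fin 8) k (A k)) (c : A k) : PP k := t0 bb (c ⊗ₜ 1)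
/-- `Ψ₂(1⊗b⊗c⊗1) = t₁(b·Ψ₁(1⊗c⊗1))`. -/
def psi2 (bb : Module.Basis (Fin 8) k (A k)) (b c : A k) : PP k := t1 bb (lmp k b (psi1 bb c))
/-- `Ψ₃(1⊗a⊗b⊗c⊗1) = t₂(a·Ψ₂(1⊗b⊗c⊗1))`. -/
def psi3 (bb : Module.Basis (Fin 8) k (A k)) (a b c : A k) : AA k :=
  t2 bb (lmp k a (psi2 bb b c))
/-- `Ψ₄(1⊗a₀⊗a⊗b⊗c⊗1) = t₃(a₀·Ψ₃(1⊗a⊗b⊗c⊗1))`. -/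
def psi4 (bb : Module.Basis (Fin 8) k (A k)) (a0 a b c : A k) : AA k :=
  t3 bb (lm k a0 (psi3 bb a b c))

/-- The symmetrizing bilinear form: `⟨a,b⟩` is the coefficient of `xyxy` in
`a*b`; on basis monomials it is `1` iff `b₁b₂ = xyxy` and `0` otherwise. -/
def bform (bb : Module.Basis (Fin 8) k (A k)) (a b : A k) : k := bb.repr (a * b) 7

end QP

open QP

/-!
Everything is a finite computation in the eight-dimensional algebra `A`. In characteristic 2
the defining relations read `x² = yxy`, `y² = xyx`; together with `x⁴ = y⁴ = 0` they give
`yxyx = xyxy` (compare `x·x²` with `x²·x`), `yxyxy = y⁴ = 0`, and they kill `x²y` and `y²x`,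
since `x²y = y(x²y)x` and `y²x = x(y²x)y`. These rules bring every word in `x, y` to a basis monomial or to `0`, which
lets us tabulate `t₁(b⊗x⊗1 + x·C(b))` and `t₁(b⊗y⊗1 + y·C(b))` and read off the
`xyxy`-coefficients: `Δ(v₁) = 0`, `Δ(v₂) = (xy + yx, 0)` and `Δ(v₂') = (0, xy + yx)`, which are
the coboundaries `(xc + cx, yc + cy)` of `c = 0, y, x`.
-/

theorem eq_pow_mul_mul_pow_of_eq_mul_mul {R : Type*} [Monoid R] {a b u : R}
    (h : u = a * u * b) (n : ℕ) : u = a ^ n * u * b ^ n := by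
  induction n with
  | zero => simp
  | succ n ih =>
    conv_lhs => rw [h, ih]
    rw [pow_succ', pow_succ b]
    simp only [mul_assoc]

theorem add_self_eq_zero_of_charTwo (k : Type*) [Field k] [CharP k 2] {M : Type*}
    [AddCommMonoid M] [Module k M] (m : M) : m + m = 0 := by
  rw [← two_smul k m, CharTwo.two_eq_zero, zero_smul]

theorem eq_of_add_eq_zero_of_charTwo (k : Type*) [Field k] [CharP k 2] {M : Type*}
    [AddCommMonoid M] [Module k M] {m n : M} (h : m + n = 0) : m = n := by
  rw [← add_zero m, ← add_self_eq_zero_of_charTwo k n, ← add_assoc, h, zero_add]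

namespace QP

variable {k : Type*} [Field k]

section Relations

theorem x_mul_x_add : x k * x k + y k * x k * y k = 0 := by
  have h := RingQuot.mkAlgHom_rel k (QRel.rx (k := k))
  simp only [map_add, map_mul, map_zero] at h
  exact h

theorem y_mul_y_add : y k * y k + x k * y k * x k = 0 := by
  have h := RingQuot.mkAlgHom_rel k (QRel.ry (k := k))
  simp only [map_add, map_mul, map_zero] at h
  exact h

theorem x_pow_four : x k ^ 4 = 0 := by
  have h := RingQuot.mkAlgHom_rel k (QRel.x4 (k := k))
  simp only [map_pow, map_zero] at h
  exact h

theorem y_pow_four : y k ^ 4 = 0 := by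
  have h := RingQuot.mkAlgHom_rel k (QRel.y4 (k := k))
  simp only [map_pow, map_zero] at h
  exact h

variable [CharP k 2]

-- The `simp` lemmas below rewrite right-associated words in `x, y` to normal form.

@[simp]
theorem x_mul_x : x k * x k = y k * (x k * y k) := by
  rw [← mul_assoc]; exact eq_of_add_eq_zero_of_charTwo k x_mul_x_add

@[simp]
theorem y_mul_y : y k * y k = x k * (y k * x k) := by
  rw [← mul_assoc]; exact eq_of_add_eq_zero_of_charTwo k y_mul_y_add

@[simp]
theorem y_mul_x_mul_y_mul_x : y k * (x k * (y k * x k)) = x k * (y k * (x k * y k)) := by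
  have h : x k * (x k * x k) = x k * x k * x k := (mul_assoc _ _ _).symm
  rw [x_mul_x] at h
  simpa only [mul_assoc] using h.symm

@[simp]
theorem y_mul_x_mul_y_mul_x_mul_y : y k * (x k * (y k * (x k * y k))) = 0 := by
  rw [← y_pow_four (k := k), pow_succ', pow_three', y_mul_y]
  simp only [mul_assoc]

@[simp]
theorem x_mul_x_mul_y : x k * (x k * y k) = 0 := by
  have h : x k * x k * y k = y k * (x k * x k * y k) * x k :=
    calc x k * x k * y k = y k * x k * (y k * y k) := by rw [x_mul_x]; simp only [mul_assoc]
      _ = y k * (x k * x k * y k) * x k := by rw [y_mul_y]; simp only [mul_assoc]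
  rw [← mul_assoc, eq_pow_mul_mul_pow_of_eq_mul_mul h 4, y_pow_four, zero_mul, zero_mul]

@[simp]
theorem y_mul_y_mul_x : y k * (y k * x k) = 0 := by
  have h : y k * y k * x k = x k * (y k * y k * x k) * y k :=
    calc y k * y k * x k = x k * y k * (x k * x k) := by rw [y_mul_y]; simp only [mul_assoc]
      _ = x k * (y k * y k * x k) * y k := by rw [x_mul_x]; simp only [mul_assoc]
  rw [← mul_assoc, eq_pow_mul_mul_pow_of_eq_mul_mul h 4, x_pow_four, zero_mul, zero_mul]

@[simp]
theorem x_mul_x_mul_y_mul (t : A k) : x k * (x k * (y k * t)) = 0 := by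
  simpa only [mul_assoc, zero_mul] using congrArg (· * t) (x_mul_x_mul_y (k := k))

@[simp]
theorem y_mul_y_mul_x_mul (t : A k) : y k * (y k * (x k * t)) = 0 := by
  simpa only [mul_assoc, zero_mul] using congrArg (· * t) (y_mul_y_mul_x (k := k))

end Relations

section Basis

variable {bb : Module.Basis (Fin 8) k (A k)}

theorem rext_tmul {V : Type*} [AddCommGroup V] [Module k V] (g : Fin 8 → (A k →ₗ[k] V))
    (m a : A k) : rext bb g (m ⊗ₜ a) = ∑ i, bb.repr m i • g i a := by
  simp [rext]

variable (hbb : ∀ i, bb i = mon k i)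
include hbb

theorem repr_mon (i : Fin 8) : bb.repr (mon k i) = Finsupp.single i 1 := by
  rw [← hbb, bb.repr_self]

theorem repr_monomials :
    bb.repr 1 = Finsupp.single 0 1 ∧ bb.repr (x k) = Finsupp.single 1 1 ∧
      bb.repr (y k) = Finsupp.single 2 1 ∧ bb.repr (x k * y k) = Finsupp.single 3 1 ∧
      bb.repr (y k * x k) = Finsupp.single 4 1 ∧
      bb.repr (x k * (y k * x k)) = Finsupp.single 5 1 ∧
      bb.repr (y k * (x k * y k)) = Finsupp.single 6 1 ∧
      bb.repr (x k * (y k * (x k * y k))) = Finsupp.single 7 1 := by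
  have h := repr_mon hbb
  exact ⟨h 0, h 1, h 2, h 3, h 4, by simpa [mon, mul_assoc] using h 5,
    by simpa [mon, mul_assoc] using h 6, by simpa [mon, mul_assoc] using h 7⟩

end Basis

theorem bimap_comp_two (c p q : A k) : (bimap k c).comp (two k p q) = bimap k (p * c * q) := by
  ext a b
  simp [bimap, two, mulm, mul_assoc]

theorem bimap_tmul (c a b : A k) : bimap k c (a ⊗ₜ b) = a * c * b := by
  simp [bimap, two, mulm]

theorem pairc_apply (c₁ c₂ : A k) (p q : AA k) :
    pairc k c₁ c₂ (p, q) = bimap k c₁ p + bimap k c₂ q := rfl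

theorem bimap_add (c c' : A k) : bimap k (c + c') = bimap k c + bimap k c' := by
  ext a b
  simp [bimap, two, mulm, mul_add, add_mul]

theorem bimap_comp_d1 (c : A k) :
    (bimap k c).comp (d1 k) = pairc k (x k * c + c * x k) (y k * c + c * y k) := by
  simp only [d1, pairc, LinearMap.comp_coprod, LinearMap.comp_add, bimap_comp_two, bimap_add,
    mul_one, one_mul]

def t1X : Fin 8 → PP k :=
  ![0, 0, 0,
    (1 ⊗ₜ y k + y k ⊗ₜ (y k * x k), (y k * x k) ⊗ₜ 1),
    (y k ⊗ₜ 1 + (x k * y k) ⊗ₜ y k, 1 ⊗ₜ (x k * y k)),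
    ((x k * y k) ⊗ₜ 1 + 1 ⊗ₜ (y k * x k), x k ⊗ₜ (x k * y k) + (y k * x k) ⊗ₜ x k),
    (0, 1 ⊗ₜ y k + y k ⊗ₜ 1),
    (x k ⊗ₜ x k + (y k * (x k * y k)) ⊗ₜ 1, 0)]

def t1Y : Fin 8 → PP k :=
  ![0, 0, 0,
    (1 ⊗ₜ (y k * x k), x k ⊗ₜ 1 + (y k * x k) ⊗ₜ x k),
    ((x k * y k) ⊗ₜ 1, x k ⊗ₜ (x k * y k) + 1 ⊗ₜ x k),
    (0, 1 ⊗ₜ y k + y k ⊗ₜ 1),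
    ((x k * y k) ⊗ₜ y k + y k ⊗ₜ (y k * x k), (y k * x k) ⊗ₜ 1 + 1 ⊗ₜ (x k * y k)),
    (0, 1 ⊗ₜ (x k * (y k * x k)) + y k ⊗ₜ y k)]

def bvDelta (bb : Module.Basis (Fin 8) k (A k)) (v : PP k →ₗ[k] A k) : PP k →ₗ[k] A k :=
  pairc k
    (∑ i ∈ Finset.univ.erase (0 : Fin 8),
      bform bb (v (t1 bb ((mon k i ⊗ₜ[k] (1 : A k), 0) + lmp k (x k) (Cm k i)))) 1 • dm k i)
    (∑ i ∈ Finset.univ.erase (0 : Fin 8),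
      bform bb (v (t1 bb ((0, mon k i ⊗ₜ[k] (1 : A k)) + lmp k (y k) (Cm k i)))) 1 • dm k i)

section Computation

variable [CharP k 2] {bb : Module.Basis (Fin 8) k (A k)} (hbb : ∀ i, bb i = mon k i)
include hbb

theorem t1_x_input (i : Fin 8) :
    t1 bb ((mon k i ⊗ₜ[k] (1 : A k), 0) + lmp k (x k) (Cm k i)) = t1X i := by
  fin_cases i <;> simp [t1X, Cm, mon, lmp, lm, t1, el, rext_tmul, repr_monomials hbb,
    Finsupp.single_apply, mul_assoc, add_self_eq_zero_of_charTwo k]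
  -- left over: in `t1X 7` the two copies of `1 ⊗ yxy` cancel
  abel_nf
  simp [two_zsmul, add_self_eq_zero_of_charTwo k]

theorem t1_y_input (i : Fin 8) :
    t1 bb ((0, mon k i ⊗ₜ[k] (1 : A k)) + lmp k (y k) (Cm k i)) = t1Y i := by
  fin_cases i <;> simp [t1Y, Cm, mon, lmp, lm, t1, el, rext_tmul, repr_monomials hbb,
    Finsupp.single_apply, mul_assoc, add_self_eq_zero_of_charTwo k]

theorem bvDelta_eq (v : PP k →ₗ[k] A k) :
    bvDelta bb v = pairc k (∑ i, bform bb (v (t1X i)) 1 • dm k i)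
      (∑ i, bform bb (v (t1Y i)) 1 • dm k i) := by
  simp only [bvDelta, t1_x_input hbb, t1_y_input hbb]
  rw [Finset.sum_erase _ (by simp [t1X, bform]), Finset.sum_erase _ (by simp [t1Y, bform])]

theorem bvDelta_pairc_y_x : bvDelta bb (pairc k (y k) (x k)) = (bimap k 0).comp (d1 k) := by
  rw [bvDelta_eq hbb, bimap_comp_d1]
  congr 1 <;> simp [Fin.sum_univ_eight, t1X, t1Y, pairc_apply, bimap_tmul, bform, dm, mon,
    repr_monomials hbb, mul_assoc, add_self_eq_zero_of_charTwo k]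

theorem bvDelta_pairc_x_zero : bvDelta bb (pairc k (x k) 0) = (bimap k (y k)).comp (d1 k) := by
  rw [bvDelta_eq hbb, bimap_comp_d1]
  congr 1 <;> simp [Fin.sum_univ_eight, t1X, t1Y, pairc_apply, bimap_tmul, bform, dm, mon,
    repr_monomials hbb, mul_assoc, add_self_eq_zero_of_charTwo k]

theorem bvDelta_pairc_zero_y : bvDelta bb (pairc k 0 (y k)) = (bimap k (x k)).comp (d1 k) := by
  rw [bvDelta_eq hbb, bimap_comp_d1]
  congr 1 <;> simp [Fin.sum_univ_eight, t1X, t1Y, pairc_apply, bimap_tmul, bform, dm, mon,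
    repr_monomials hbb, mul_assoc, add_self_eq_zero_of_charTwo k, add_comm]

end Computation

end QP

theorem stmt_15_general (k : Type) [Field k] [CharP k 2]
    (bb : Module.Basis (Fin 8) k (A k)) (hbb : ∀ i, bb i = mon k i) :
    ∀ v : PP k →ₗ[k] A k,
      (v = pairc k (y k) (x k) ∨ v = pairc k (x k) 0 ∨ v = pairc k 0 (y k)) →
      ∃ c : A k,
        pairc k
          (∑ i ∈ Finset.univ.erase (0 : Fin 8),
            bform bb
              (v (t1 bb ((mon k i ⊗ₜ[k] (1 : A k), 0) + lmp k (x k) (Cm k i)))) 1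
              • dm k i)
          (∑ i ∈ Finset.univ.erase (0 : Fin 8),
            bform bb
              (v (t1 bb ((0, mon k i ⊗ₜ[k] (1 : A k)) + lmp k (y k) (Cm k i)))) 1
              • dm k i)
          = (bimap k c).comp (d1 k) := by
  rintro v (rfl | rfl | rfl)
  · exact ⟨0, bvDelta_pairc_y_x hbb⟩
  · exact ⟨y k, bvDelta_pairc_x_zero hbb⟩
  · exact ⟨x k, bvDelta_pairc_zero_y hbb⟩

/-- For each of the 2-cocycles `v₁ = (y,x)`, `v₂ = (x,0)`, `v₂' = (0,y)` in
`Hom_{A^e}(P₂, A)`, the 1-cochain `Δ(v) ∈ Hom_{A^e}(P₁, A)` with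
`Δ(v)(1⊗x⊗1) = Σ_{b∈B∖{1}} ⟨v(t₁(b⊗x⊗1 + x·C(b))), 1⟩·b*` and
`Δ(v)(1⊗y⊗1) = Σ_{b∈B∖{1}} ⟨v(t₁(b⊗y⊗1 + y·C(b))), 1⟩·b*`
is a Hochschild coboundary, i.e. lies in the image of
`Hom_{A^e}(P₀,A) → Hom_{A^e}(P₁,A)`, `g ↦ g∘d₁` (elements of
`Hom_{A^e}(P₀,A)` being the maps `a⊗b ↦ a·c·b`).  Hence
`Δ(v₁) = Δ(v₂) = Δ(v₂') = 0` in `HH¹(A)`. -/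
theorem stmt_15 (k : Type) [Field k] [IsAlgClosed k] [CharP k 2]
    (bb : Module.Basis (Fin 8) k (A k)) (hbb : ∀ i, bb i = mon k i) :
    ∀ v : PP k →ₗ[k] A k,
      (v = pairc k (y k) (x k) ∨ v = pairc k (x k) 0 ∨ v = pairc k 0 (y k)) →
      ∃ c : A k,
        pairc k
          (∑ i ∈ Finset.univ.erase (0 : Fin 8),
            bform bb
              (v (t1 bb ((mon k i ⊗ₜ[k] (1 : A k), 0) + lmp k (x k) (Cm k i)))) 1
              • dm k i)
          (∑ i ∈ Finset.univ.erase (0 : Fin 8),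
            bform bb
              (v (t1 bb ((0, mon k i ⊗ₜ[k] (1 : A k)) + lmp k (y k) (Cm k i)))) 1
              • dm k i)
          = (bimap k c).comp (d1 k) :=
  stmt_15_general k bb hbb
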